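/- Let θ ∈ ℝ be irrational and let g = [[a,b],[c,d]] ∈ SL₂(ℤ) satisfy (aθ+b)/(cθ+d) = θ, with c > 0 and cθ+d > 0; set ε = (cθ+d)/c. Let E be the space of functions f : ℝ × ℤ/cℤ → ℂ Schwartz in the first variable, with operators (Ǔf)(x,[n]) = f(x−ε, [n−1]), (V̌f)(x,[n]) = exp(2πix)·exp(−2πi d n̄/c)·f(x,[n]), (Ûf)(x,[n]) = f(x−1/c, [n−a]), (V̂f)(x,[n]) = exp(2πix/(cε))·exp(−2πi n̄/c)·f(x,[n]), where n̄ ∈ {0,…,c−1} represents [n]. Then each of Û and V̂ commutes with each of Ǔ and V̌: Û∘Ǔ = Ǔ∘Û, Û∘V̌ = V̌∘Û, V̂∘Ǔ = Ǔ∘V̂, and V̂∘V̌ = V̌∘V̂. -/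

import Mathlib

open Complex Real

/-- `f : ℝ × ℤ/cℤ → ℂ` is Schwartz in the first variable. -/
def SchwartzInFirst {c : ℕ} (f : ℝ × ZMod c → ℂ) : Prop :=
  ∀ n : ZMod c, ∃ g : SchwartzMap ℝ ℂ, ∀ x : ℝ, f (x, n) = g x

/-- The operator `Ǔ`: `(Ǔf)(x,[n]) = f(x−ε, [n−1])`. -/
def Ucheck (ε : ℝ) {c : ℕ} (f : ℝ × ZMod c → ℂ) : ℝ × ZMod c → ℂ :=
  fun p => f (p.1 - ε, p.2 - 1)

/-- The operator `V̌`: `(V̌f)(x,[n]) = exp(2πix)·exp(−2πi d n̄/c)·f(x,[n])`. -/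
noncomputable def Vcheck (d : ℤ) {c : ℕ} (f : ℝ × ZMod c → ℂ) : ℝ × ZMod c → ℂ :=
  fun p => Complex.exp (2 * π * I * (p.1 : ℂ)) *
    Complex.exp (-2 * π * I * (d : ℂ) * ((p.2.val : ℕ) : ℂ) / (c : ℂ)) * f p

/-- The operator `Û`: `(Ûf)(x,[n]) = f(x−1/c, [n−a])`. -/
noncomputable def Uhat (a : ℤ) {c : ℕ} (f : ℝ × ZMod c → ℂ) : ℝ × ZMod c → ℂ :=
  fun p => f (p.1 - 1 / (c : ℝ), p.2 - (a : ZMod c))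

/-- The operator `V̂`: `(V̂f)(x,[n]) = exp(2πix/(cε))·exp(−2πi n̄/c)·f(x,[n])`. -/
noncomputable def Vhat (ε : ℝ) {c : ℕ} (f : ℝ × ZMod c → ℂ) : ℝ × ZMod c → ℂ :=
  fun p => Complex.exp (2 * π * I * (p.1 : ℂ) / ((c : ℂ) * (ε : ℂ))) *
    Complex.exp (-2 * π * I * ((p.2.val : ℕ) : ℂ) / (c : ℂ)) * f p

/-!
Each checked operator commutes with each hatted one because both kinds are translations of
`ℝ × ℤ/cℤ` or multiplications by a phase. Translations commute with each other, multiplications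
commute with each other, and a translation by `s` commutes with multiplication by `φ` as soon as
`φ` is `s`-periodic. The two remaining phases are periodic: translating `V̌`'s phase by
`(1/c, a)` multiplies it by `e(1/c) · e(-d a/c)`, which is `1` because `a d ≡ 1 (mod c)`, and
translating `V̂`'s phase by `(ε, 1)` multiplies it by `e(1/c) · e(-1/c) = 1`.
-/

theorem AddChar.map_mul_map_neg {A M : Type*} [AddGroup A] [Monoid M] (ψ : AddChar A M) (a : A) :
    ψ a * ψ (-a) = 1 := by
  rw [← ψ.map_add_eq_mul, add_neg_cancel, ψ.map_zero_eq_one]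

section Translation

variable {G R : Type*}

theorem commute_mul_mul [CommSemigroup R] (φ ψ : G → R) :
    Function.Commute (φ * · : (G → R) → G → R) (ψ * ·) :=
  fun f => mul_left_comm φ ψ f

variable [AddCommGroup G]

theorem commute_translate_translate (s t : G) :
    Function.Commute (translate s : (G → R) → G → R) (translate t) :=
  fun f => translate_comm s t f

theorem commute_translate_mul_of_periodic [Mul R] {s : G} {φ : G → R}
    (hφ : Function.Periodic φ s) :
    Function.Commute (translate s) (φ * ·) :=
  fun f => funext fun p => by simp only [translate_apply, Pi.mul_apply, hφ.sub_eq]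

end Translation

section Phases

variable {c : ℕ}

noncomputable def checkPhase (d : ℤ) (p : ℝ × ZMod c) : ℂ :=
  exp (2 * π * I * (p.1 : ℂ)) * exp (-2 * π * I * (d : ℂ) * ((p.2.val : ℕ) : ℂ) / (c : ℂ))

noncomputable def hatPhase (ε : ℝ) (p : ℝ × ZMod c) : ℂ :=
  exp (2 * π * I * (p.1 : ℂ) / ((c : ℂ) * (ε : ℂ))) *
    exp (-2 * π * I * ((p.2.val : ℕ) : ℂ) / (c : ℂ))

theorem Ucheck_eq_translate (ε : ℝ) : Ucheck (c := c) ε = translate (ε, 1) := rfl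

theorem Uhat_eq_translate (a : ℤ) : Uhat (c := c) a = translate (1 / (c : ℝ), (a : ZMod c)) :=
  rfl

theorem Vcheck_eq_mul (d : ℤ) : Vcheck (c := c) d = (checkPhase d * ·) := rfl

theorem Vhat_eq_mul (ε : ℝ) : Vhat (c := c) ε = (hatPhase ε * ·) := rfl

variable [NeZero c]

theorem exp_neg_mul_val_div_eq_stdAddChar (k : ℤ) (n : ZMod c) :
    exp (-2 * π * I * (k : ℂ) * ((n.val : ℕ) : ℂ) / (c : ℂ)) =
      ZMod.stdAddChar (-((k : ZMod c) * n)) := by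
  have hlift : -((k : ZMod c) * n) = ((-(k * n.val) : ℤ) : ZMod c) := by
    push_cast [ZMod.natCast_val, ZMod.cast_id]
    rfl
  rw [hlift, ZMod.stdAddChar_coe]
  push_cast
  ring_nf

theorem ZMod.stdAddChar_one : ZMod.stdAddChar (1 : ZMod c) = exp (2 * π * I / c) := by
  simpa using ZMod.stdAddChar_coe (N := c) 1

theorem exp_neg_val_div_eq_stdAddChar (n : ZMod c) :
    exp (-2 * π * I * ((n.val : ℕ) : ℂ) / (c : ℂ)) = ZMod.stdAddChar (-n) := by
  simpa using exp_neg_mul_val_div_eq_stdAddChar 1 n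

theorem periodic_checkPhase {a d : ℤ} (had : (a : ZMod c) * d = 1) :
    Function.Periodic (checkPhase (c := c) d) (1 / (c : ℝ), (a : ZMod c)) := by
  rintro ⟨x, n⟩
  have hshift : -((d : ZMod c) * (n + a)) = -(d * n) + -1 := by
    linear_combination (-1 : ZMod c) * had
  have hreal : exp (2 * π * I * ((x + 1 / c : ℝ) : ℂ)) =
      exp (2 * π * I * x) * ZMod.stdAddChar (1 : ZMod c) := by
    rw [ZMod.stdAddChar_one, ← Complex.exp_add]
    push_cast
    ring_nf
  simp only [checkPhase, Prod.mk_add_mk, exp_neg_mul_val_div_eq_stdAddChar, hshift,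
    AddChar.map_add_eq_mul, hreal]
  linear_combination (exp (2 * π * I * x) * ZMod.stdAddChar (-((d : ZMod c) * n))) *
    ZMod.stdAddChar.map_mul_map_neg (1 : ZMod c)

theorem periodic_hatPhase {ε : ℝ} (hε : ε ≠ 0) :
    Function.Periodic (hatPhase (c := c) ε) (ε, 1) := by
  rintro ⟨x, n⟩
  have hreal : exp (2 * π * I * ((x + ε : ℝ) : ℂ) / (c * ε)) =
      exp (2 * π * I * x / (c * ε)) * ZMod.stdAddChar (1 : ZMod c) := by
    rw [ZMod.stdAddChar_one, ← Complex.exp_add]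
    have hc : (c : ℂ) ≠ 0 := NeZero.ne _
    have hεC : (ε : ℂ) ≠ 0 := ofReal_ne_zero.2 hε
    congr 1
    push_cast
    field_simp
  simp only [hatPhase, Prod.mk_add_mk, exp_neg_val_div_eq_stdAddChar, neg_add,
    AddChar.map_add_eq_mul, hreal]
  linear_combination (exp (2 * π * I * x / (c * ε)) * ZMod.stdAddChar (-n)) *
    ZMod.stdAddChar.map_mul_map_neg (1 : ZMod c)

end Phases

theorem hat_operators_commute_with_check_operators_general
    (θ : ℝ)
    (a b d : ℤ) (c : ℕ) (hc : 0 < c)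
    (hdet : a * d - b * (c : ℤ) = 1)
    (hpos : 0 < (c : ℝ) * θ + (d : ℝ))
    (ε : ℝ) (hε : ε = ((c : ℝ) * θ + (d : ℝ)) / (c : ℝ))
    (f : ℝ × ZMod c → ℂ) :
    (∀ p : ℝ × ZMod c, Uhat a (Ucheck ε f) p = Ucheck ε (Uhat a f) p) ∧
    (∀ p : ℝ × ZMod c, Uhat a (Vcheck d f) p = Vcheck d (Uhat a f) p) ∧
    (∀ p : ℝ × ZMod c, Vhat ε (Ucheck ε f) p = Ucheck ε (Vhat ε f) p) ∧
    (∀ p : ℝ × ZMod c, Vhat ε (Vcheck d f) p = Vcheck d (Vhat ε f) p) := by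
  have : NeZero c := ⟨hc.ne'⟩
  have had : (a : ZMod c) * d = 1 := by
    simpa using congrArg (Int.cast : ℤ → ZMod c) hdet
  have hε0 : ε ≠ 0 := hε ▸ (div_pos hpos (Nat.cast_pos.2 hc)).ne'
  rw [Uhat_eq_translate, Ucheck_eq_translate, Vcheck_eq_mul, Vhat_eq_mul]
  exact ⟨congrFun (commute_translate_translate _ _ f),
    congrFun (commute_translate_mul_of_periodic (periodic_checkPhase had) f),
    congrFun ((commute_translate_mul_of_periodic (periodic_hatPhase hε0)).symm f),
    congrFun (commute_mul_mul _ _ f)⟩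

/-- The left action operators `Û, V̂` commute with the right action operators
`Ǔ, V̌`, making the Heisenberg module `E_g` an `𝒜_θ`-`𝒜_θ`-bimodule. -/
theorem hat_operators_commute_with_check_operators
    (θ : ℝ) (hθ : Irrational θ)
    (a b d : ℤ) (c : ℕ) (hc : 0 < c)
    (hdet : a * d - b * (c : ℤ) = 1)
    (hpos : 0 < (c : ℝ) * θ + (d : ℝ))
    (hfix : ((a : ℝ) * θ + (b : ℝ)) / ((c : ℝ) * θ + (d : ℝ)) = θ)
    (ε : ℝ) (hε : ε = ((c : ℝ) * θ + (d : ℝ)) / (c : ℝ))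
    (f : ℝ × ZMod c → ℂ) (hf : SchwartzInFirst f) :
    (∀ p : ℝ × ZMod c, Uhat a (Ucheck ε f) p = Ucheck ε (Uhat a f) p) ∧
    (∀ p : ℝ × ZMod c, Uhat a (Vcheck d f) p = Vcheck d (Uhat a f) p) ∧
    (∀ p : ℝ × ZMod c, Vhat ε (Ucheck ε f) p = Ucheck ε (Vhat ε f) p) ∧
    (∀ p : ℝ × ZMod c, Vhat ε (Vcheck d f) p = Vcheck d (Vhat ε f) p) :=
  hat_operators_commute_with_check_operators_general θ a b d c hc hdet hpos ε hε f
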